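/- arXiv:1109.5540 — 5 statements merged into one kernel-verified Lean document; each statement's English description precedes it below -/
import Mathlib

section
/- Let r be a natural number, f = q/(1-(-1)^{r+1}q) ∈ ℚ[[q]], and δ = q·d/dq. For every m ≥ 0 there exists a polynomial P_m ∈ ℤ[X] of degree m+1 with zero constant term, linear coefficient 1, and leading coefficient (-1)^{m(r+1)}·m!, such that δ^m f = P_m(f). -/
/-- The Euler derivation δ = q·d/dq on formal power series. -/
noncomputable def eulerOp (g : PowerSeries ℚ) : PowerSeries ℚ :=
  PowerSeries.mk fun d => (d : ℚ) * PowerSeries.coeff d g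

/-- The basic extremal series f = Σ_{d≥1} (-1)^{(d-1)(r+1)} q^d = q/(1-(-1)^{r+1}q). -/
noncomputable def fSer (r : ℕ) : PowerSeries ℚ :=
  PowerSeries.mk fun d => if d = 0 then 0 else ((-1 : ℚ)) ^ ((d - 1) * (r + 1))

/-!
If `D f = f + e f²` for a derivation `D`, then by the chain rule `D (P f) = P'(f) (f + e f²)`, so
`D^m f = P_m(f)` for the polynomials `P₀ = X`, `P_{m+1} = X (1 + e X) P_m'`. Over a domain without
additive torsion each step raises the degree by one and multiplies the leading coefficient by
`(m + 1) e`, while the coefficients of `1` and `X` are preserved. The series `f = q/(1 - e q)` with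
`e = (-1)^(r+1)` satisfies `(1 - e q) f = q`, and applying `δ` to this identity gives `δ f = f + e f²`.
-/

namespace Polynomial

variable {R : Type*} [CommRing R]

noncomputable def riccatiPoly (e : R) : ℕ → R[X]
  | 0 => X
  | m + 1 => X * (C e * X + 1) * derivative (riccatiPoly e m)

@[simp]
theorem riccatiPoly_zero (e : R) : riccatiPoly e 0 = X := rfl

theorem riccatiPoly_succ (e : R) (m : ℕ) :
    riccatiPoly e (m + 1) = X * (C e * X + 1) * derivative (riccatiPoly e m) := rfl

theorem coeff_riccatiPoly_zero (e : R) (m : ℕ) : (riccatiPoly e m).coeff 0 = 0 := by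
  cases m <;> simp [riccatiPoly_succ, mul_assoc]

theorem coeff_riccatiPoly_one (e : R) (m : ℕ) : (riccatiPoly e m).coeff 1 = 1 := by
  induction m with
  | zero => simp
  | succ m ih =>
    rw [riccatiPoly_succ, mul_assoc, coeff_X_mul, mul_coeff_zero, coeff_derivative, ih]
    simp

variable [IsDomain R] [IsAddTorsionFree R] {e : R}

theorem natDegree_riccatiPoly (he : e ≠ 0) (m : ℕ) : (riccatiPoly e m).natDegree = m + 1 := by
  have hlin : (C e * X + 1 : R[X]).natDegree = 1 := by
    rw [← C_1, natDegree_linear he]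
  induction m with
  | zero => simp
  | succ m ih =>
    have hder : derivative (riccatiPoly e m) ≠ 0 := by
      rw [derivative_ne_zero, ih]; omega
    have hlin0 : (C e * X + 1 : R[X]) ≠ 0 := ne_zero_of_natDegree_gt (n := 0) (by omega)
    rw [riccatiPoly_succ, natDegree_mul (mul_ne_zero X_ne_zero hlin0) hder,
      natDegree_mul X_ne_zero hlin0, natDegree_derivative, ih, hlin, natDegree_X]
    omega

theorem leadingCoeff_riccatiPoly (he : e ≠ 0) (m : ℕ) :
    (riccatiPoly e m).leadingCoeff = e ^ m * m.factorial := by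
  induction m with
  | zero => simp
  | succ m ih =>
    rw [riccatiPoly_succ, leadingCoeff_mul, leadingCoeff_mul, leadingCoeff_X, ← C_1,
      leadingCoeff_linear he, leadingCoeff_derivative, ih, natDegree_riccatiPoly he,
      Nat.factorial_succ]
    push_cast
    ring

end Polynomial

open Polynomial in
theorem Derivation.iterate_eq_aeval_riccatiPoly {R A : Type*} [CommRing R] [CommRing A]
    [Algebra R A] (D : Derivation R A A) {e : R} {f : A}
    (hf : D f = f + algebraMap R A e * f ^ 2) (m : ℕ) :
    (⇑D)^[m] f = aeval f (riccatiPoly e m) := by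
  induction m with
  | zero => simp
  | succ m ih =>
    rw [Function.iterate_succ_apply', ih, map_aeval, riccatiPoly_succ, hf]
    simp only [map_mul, map_add, aeval_X, aeval_C, map_one, smul_eq_mul]
    ring

namespace PowerSeries

variable (R : Type*) [CommRing R]

noncomputable def eulerDer : Derivation R R⟦X⟧ R⟦X⟧ := (X : R⟦X⟧) • derivative R

variable {R}

theorem eulerDer_apply (g : R⟦X⟧) : eulerDer R g = X * derivative R g := rfl

theorem eulerDer_X : eulerDer R X = X := by
  rw [eulerDer_apply, derivative_X, mul_one]

theorem eulerDer_C (c : R) : eulerDer R (C c) = 0 := by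
  rw [eulerDer_apply, derivative_C, mul_zero]

theorem eulerDer_eq_add_mul_sq_of_one_sub_mul_eq_X {c : R} {g : R⟦X⟧}
    (hg : (1 - C c * X) * g = X) : eulerDer R g = g + C c * g ^ 2 := by
  have hunit : IsUnit (1 - C c * X : R⟦X⟧) := by
    simp [isUnit_iff_constantCoeff]
  have hδ := congrArg (eulerDer R) hg
  rw [Derivation.leibniz, map_sub, Derivation.leibniz, eulerDer_X, eulerDer_C,
    Derivation.map_one_eq_zero] at hδ
  simp only [smul_eq_mul] at hδ
  apply hunit.mul_left_cancel
  linear_combination hδ - (1 + C c * g) * hg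

theorem coe_eulerDer_rat : ⇑(eulerDer ℚ) = eulerOp := by
  funext g
  ext d
  cases d with
  | zero => simp [eulerOp, eulerDer_apply]
  | succ n =>
    rw [eulerOp, coeff_mk, eulerDer_apply, coeff_succ_X_mul, coeff_derivative]
    push_cast
    ring

theorem one_sub_mul_fSer (r : ℕ) : (1 - C ((-1 : ℚ) ^ (r + 1)) * X) * fSer r = X := by
  ext d
  rw [sub_mul, one_mul, mul_assoc, map_sub, coeff_C_mul]
  rcases d with _ | d
  · simp [fSer]
  · rw [coeff_succ_X_mul, fSer, coeff_mk, coeff_mk, coeff_X]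
    rcases d with _ | k
    · simp
    · simp only [Nat.add_sub_cancel, if_neg (Nat.succ_ne_zero _),
        if_neg (by omega : k + 1 + 1 ≠ 1), ← pow_add]
      ring_nf

end PowerSeries

theorem stmt_4 (r m : ℕ) :
    ∃ P : Polynomial ℤ,
      P.natDegree = m + 1 ∧
      P.coeff 0 = 0 ∧
      P.coeff 1 = 1 ∧
      P.leadingCoeff = (-1) ^ (m * (r + 1)) * (m.factorial : ℤ) ∧
      eulerOp^[m] (fSer r) = Polynomial.aeval (fSer r) P := by
  have he : ((-1 : ℤ) ^ (r + 1)) ≠ 0 := pow_ne_zero _ (by norm_num)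
  have hriccati :=
    PowerSeries.eulerDer_eq_add_mul_sq_of_one_sub_mul_eq_X (PowerSeries.one_sub_mul_fSer r)
  refine ⟨Polynomial.riccatiPoly ((-1) ^ (r + 1)) m, Polynomial.natDegree_riccatiPoly he m,
    Polynomial.coeff_riccatiPoly_zero _ m, Polynomial.coeff_riccatiPoly_one _ m, ?_, ?_⟩
  · rw [Polynomial.leadingCoeff_riccatiPoly he, ← pow_mul, mul_comm (r + 1)]
  · rw [← PowerSeries.coe_eulerDer_rat]
    refine ((PowerSeries.eulerDer ℚ).restrictScalars ℤ).iterate_eq_aeval_riccatiPoly ?_ m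
    exact hriccati.trans (by simp)
end

section
/- Let r be a natural number, f = q/(1-(-1)^{r+1}q) ∈ ℚ[[q]], and δ = q·d/dq. For every m ≥ 0, the power series f^{m+1} lies in the ℚ-linear span of {δ^j f : 0 ≤ j ≤ m}. -/
open PowerSeries

section IterateSpan

variable {K A : Type*} [CommSemiring K] [CommSemiring A] [Algebra K A]

def iterateSpan (D : Derivation K A A) (f : A) (m : ℕ) : Submodule K A :=
  Submodule.span K {g | ∃ j ≤ m, g = D^[j] f}

variable {D : Derivation K A A} {f : A}

theorem iterateSpan_mono : Monotone (iterateSpan D f) := fun _ _ hmn =>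
  Submodule.span_mono fun _ ⟨j, hj, hg⟩ => ⟨j, hj.trans hmn, hg⟩

theorem apply_mem_iterateSpan_succ {m : ℕ} {g : A} (hg : g ∈ iterateSpan D f m) :
    D g ∈ iterateSpan D f (m + 1) := by
  refine Submodule.span_le.mpr ?_ (Submodule.apply_mem_span_image_of_mem_span D.toLinearMap hg)
  rintro _ ⟨_, ⟨j, hj, rfl⟩, rfl⟩
  exact Submodule.subset_span ⟨j + 1, by omega, (Function.iterate_succ_apply' _ _ _).symm⟩

theorem Derivation.apply_pow_succ_of_apply_eq {a c : K} (hf : D f = a • f + c • f ^ 2) (n : ℕ) :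
    D (f ^ (n + 1)) = ((n + 1 : K) * a) • f ^ (n + 1) + ((n + 1 : K) * c) • f ^ (n + 2) := by
  rw [Derivation.leibniz_pow, hf, Nat.add_sub_cancel, nsmul_eq_mul, smul_eq_mul]
  simp only [Algebra.smul_def, map_mul, map_add, map_one, _root_.map_natCast, Nat.cast_add,
    Nat.cast_one]
  ring

end IterateSpan

theorem pow_succ_mem_iterateSpan {K A : Type*} [Field K] [CharZero K] [CommRing A] [Algebra K A]
    {D : Derivation K A A} {f : A} {a c : K} (hc : c ≠ 0) (hf : D f = a • f + c • f ^ 2)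
    (m : ℕ) : f ^ (m + 1) ∈ iterateSpan D f m := by
  induction m with
  | zero => exact Submodule.subset_span ⟨0, le_rfl, by simp⟩
  | succ n ih =>
    have hD := apply_mem_iterateSpan_succ ih
    rw [Derivation.apply_pow_succ_of_apply_eq hf] at hD
    set b : K := (n + 1 : K) * a
    set e : K := (n + 1 : K) * c
    have he : e ≠ 0 := mul_ne_zero (Nat.cast_add_one_ne_zero n) hc
    have hsolve :
        f ^ (n + 2) = e⁻¹ • (b • f ^ (n + 1) + e • f ^ (n + 2)) - (e⁻¹ * b) • f ^ (n + 1) := by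
      rw [smul_add, smul_smul, smul_smul, inv_mul_cancel₀ he, one_smul, add_sub_cancel_left]
    rw [hsolve]
    exact sub_mem (Submodule.smul_mem _ _ hD)
      (Submodule.smul_mem _ _ (iterateSpan_mono n.le_succ ih))

section EulerDerivation

variable {R : Type*} [CommRing R]

noncomputable def eulerDerivation : Derivation R R⟦X⟧ R⟦X⟧ := (X : R⟦X⟧) • derivative R

theorem eulerDerivation_apply (g : R⟦X⟧) : eulerDerivation g = X * d⁄dX R g := rfl

theorem eulerDerivation_X : eulerDerivation (X : R⟦X⟧) = X := by
  simp [eulerDerivation_apply]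

theorem coe_eulerDerivation_rat : ⇑(eulerDerivation : Derivation ℚ ℚ⟦X⟧ ℚ⟦X⟧) = eulerOp := by
  ext g (_ | n)
  · simp [eulerOp, eulerDerivation_apply]
  · rw [eulerDerivation_apply, coeff_succ_X_mul, coeff_derivative]
    simp only [eulerOp, coeff_mk, Nat.cast_add, Nat.cast_one]
    ring

theorem eulerDerivation_eq_of_one_sub_C_mul_X_mul_eq_X [IsDomain R] {f : R⟦X⟧} {c : R}
    (hf : (1 - C c * X) * f = X) : eulerDerivation f = f + c • f ^ 2 := by
  have hu : (1 - C c * X : R⟦X⟧) ≠ 0 := fun h => by simpa using congrArg constantCoeff h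
  have hδu : eulerDerivation (1 - C c * X) = -(C c * X) := by
    simp [eulerDerivation_apply, mul_comm]
  have hδ := congrArg eulerDerivation hf
  rw [Derivation.leibniz, hδu, eulerDerivation_X, smul_eq_mul, smul_eq_mul] at hδ
  apply mul_left_cancel₀ hu
  rw [smul_eq_C_mul]
  linear_combination hδ - (1 + C c * f) * hf

end EulerDerivation

theorem one_sub_C_mul_X_mul_fSer (r : ℕ) : (1 - C ((-1 : ℚ) ^ (r + 1)) * X) * fSer r = X := by
  set ε : ℚ := (-1) ^ (r + 1)
  have hf : fSer r = mk fun d => if d = 0 then 0 else ε ^ (d - 1) := by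
    simp only [fSer, pow_mul', ε]
  ext (_ | _ | n) <;> simp [hf, sub_mul, mul_assoc, coeff_succ_X_mul, coeff_X, pow_succ']

theorem stmt_5 (r m : ℕ) :
    (fSer r) ^ (m + 1) ∈
      Submodule.span ℚ {g : PowerSeries ℚ | ∃ j ≤ m, g = eulerOp^[j] (fSer r)} := by
  have hδ : eulerDerivation (fSer r) = (1 : ℚ) • fSer r + ((-1 : ℚ) ^ (r + 1)) • fSer r ^ 2 := by
    rw [one_smul]
    exact eulerDerivation_eq_of_one_sub_C_mul_X_mul_eq_X (one_sub_C_mul_X_mul_fSer r)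
  have hmem := pow_succ_mem_iterateSpan (pow_ne_zero _ (neg_ne_zero.mpr one_ne_zero)) hδ m
  rwa [iterateSpan, coe_eulerDerivation_rat] at hmem
end

section
/- Let r ≥ 0 and let f(q) = q/(1-(-1)^{r+1}q) be a rational function over ℚ, with δ = q·d/dq acting on rational functions. Then for every i ≥ 1, the rational function identity (δ^i f)(q) + (-1)^i (δ^i f)(q^{-1}) = 0 holds (as an identity of rational functions in q). -/
/-- The Euler derivation δ = q·d/dq acting on complex functions. -/
noncomputable def eulerC (g : ℂ → ℂ) : ℂ → ℂ := fun q => q * deriv g q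

/-! Differentiating `g x + c * g x⁻¹ = K` gives `eulerC g x = c * eulerC g x⁻¹`: the factor `-x⁻²`
from the chain rule for `x ↦ x⁻¹` is absorbed by the two Euler factors `x` and `x⁻¹`. So each
application of `δ` turns an identity `g x + c * g x⁻¹ = K` into one with `c` replaced by `-c` and
`K` by `0`. For `f x = x / (1 - ε x)` with `ε² = 1` one has `f x + f x⁻¹ = -ε`, which starts the
induction. -/

section EulerInversion

variable {U : Set ℂ} {g : ℂ → ℂ} {c K : ℂ}

lemma DifferentiableOn.iterate_eulerC (hg : DifferentiableOn ℂ g U) (hU : IsOpen U) (n : ℕ) :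
    DifferentiableOn ℂ (eulerC^[n] g) U := by
  induction n with
  | zero => exact hg
  | succ n ih =>
    rw [Function.iterate_succ_apply']
    exact differentiableOn_id.mul (ih.deriv hU)

lemma eulerC_eq_mul_eulerC_inv (hU : IsOpen U) (h0 : (0 : ℂ) ∉ U) (hinv : ∀ x ∈ U, x⁻¹ ∈ U)
    (hg : DifferentiableOn ℂ g U) (h : ∀ x ∈ U, g x + c * g x⁻¹ = K) {x : ℂ} (hx : x ∈ U) :
    eulerC g x = c * eulerC g x⁻¹ := by
  have hx0 : x ≠ 0 := fun hx0 => h0 (hx0 ▸ hx)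
  have hsum : HasDerivAt (fun y => g y + c * g y⁻¹)
      (deriv g x + c * (deriv g x⁻¹ * -(x ^ 2)⁻¹)) x :=
    (hg.differentiableAt (hU.mem_nhds hx)).hasDerivAt.add
      ((((hg.differentiableAt (hU.mem_nhds (hinv x hx))).hasDerivAt.comp x
        (hasDerivAt_inv hx0))).const_mul c)
  have hconst : (fun y => g y + c * g y⁻¹) =ᶠ[nhds x] fun _ => K :=
    Filter.eventually_of_mem (hU.mem_nhds hx) h
  have hzero : deriv g x + c * (deriv g x⁻¹ * -(x ^ 2)⁻¹) = 0 := by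
    rw [← hsum.deriv, hconst.deriv_eq, deriv_const]
  simp only [eulerC]
  field_simp at hzero ⊢
  linear_combination hzero

lemma iterate_eulerC_add_neg_one_pow_mul_eulerC_inv (hU : IsOpen U) (h0 : (0 : ℂ) ∉ U)
    (hinv : ∀ x ∈ U, x⁻¹ ∈ U) (hg : DifferentiableOn ℂ g U) (h : ∀ x ∈ U, g x + c * g x⁻¹ = K)
    (n : ℕ) {x : ℂ} (hx : x ∈ U) :
    eulerC^[n + 1] g x + (-1) ^ (n + 1) * c * eulerC^[n + 1] g x⁻¹ = 0 := by
  induction n generalizing x with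
  | zero =>
    rw [Function.iterate_one, eulerC_eq_mul_eulerC_inv hU h0 hinv hg h hx]
    ring
  | succ n ih =>
    rw [Function.iterate_succ_apply' _ (n + 1),
      eulerC_eq_mul_eulerC_inv hU h0 hinv (hg.iterate_eulerC hU _) (fun y hy => ih hy) hx]
    ring

end EulerInversion

section Geometric

variable {ε x : ℂ}

lemma one_sub_mul_ne_zero_iff (hε : ε * ε = 1) : 1 - ε * x ≠ 0 ↔ x ≠ ε := by
  rw [show 1 - ε * x = ε * (ε - x) by linear_combination -hε, mul_ne_zero_iff, sub_ne_zero,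
    ne_comm (a := ε) (b := x)]
  exact and_iff_right (left_ne_zero_of_mul_eq_one hε)

lemma inv_mem_compl_pair (hε : ε * ε = 1) (hx : x ∈ ({0, ε}ᶜ : Set ℂ)) :
    x⁻¹ ∈ ({0, ε}ᶜ : Set ℂ) := by
  simp only [Set.mem_compl_iff, Set.mem_insert_iff, Set.mem_singleton_iff, not_or] at hx ⊢
  refine ⟨inv_ne_zero hx.1, fun hxε => hx.2 ?_⟩
  rw [← inv_inv x, hxε, inv_eq_of_mul_eq_one_right hε]

lemma div_one_sub_mul_add_inv (hε : ε * ε = 1) (hx0 : x ≠ 0) (hxε : x ≠ ε) :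
    x / (1 - ε * x) + x⁻¹ / (1 - ε * x⁻¹) = -ε := by
  have h1 := (one_sub_mul_ne_zero_iff hε).2 hxε
  have h2 : x - ε ≠ 0 := sub_ne_zero.2 hxε
  rw [show 1 - ε * x⁻¹ = (x - ε) / x by field_simp, mul_comm] at *
  field_simp
  linear_combination (-(x ^ 2 + 1 - x * ε)) * hε

end Geometric

theorem stmt_6_general (r i : ℕ) (hi : 1 ≤ i) (q : ℂ) (hq : q ≠ 0)
    (h1 : 1 - (-1 : ℂ) ^ (r + 1) * q ≠ 0) :
    (eulerC^[i] (fun x => x / (1 - (-1 : ℂ) ^ (r + 1) * x))) q +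
      (-1 : ℂ) ^ i * (eulerC^[i] (fun x => x / (1 - (-1 : ℂ) ^ (r + 1) * x))) q⁻¹ = 0 := by
  set ε : ℂ := (-1) ^ (r + 1)
  have hε : ε * ε = 1 := by rw [← pow_add, ← two_mul, pow_mul]; norm_num
  have hU : IsOpen ({0, ε}ᶜ : Set ℂ) := ((Set.toFinite _).isClosed).isOpen_compl
  have hf : DifferentiableOn ℂ (fun x => x / (1 - ε * x)) {0, ε}ᶜ :=
    differentiableOn_id.div (by fun_prop) fun x hx =>
      (one_sub_mul_ne_zero_iff hε).2 fun hxε => hx (by simp [hxε])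
  have hf_inv : ∀ x ∈ ({0, ε}ᶜ : Set ℂ), x / (1 - ε * x) + 1 * (x⁻¹ / (1 - ε * x⁻¹)) = -ε := by
    intro x hx
    simp only [Set.mem_compl_iff, Set.mem_insert_iff, Set.mem_singleton_iff, not_or] at hx
    rw [one_mul, div_one_sub_mul_add_inv hε hx.1 hx.2]
  have hq : q ∈ ({0, ε}ᶜ : Set ℂ) := by
    simp [hq, (one_sub_mul_ne_zero_iff hε).1 h1]
  obtain ⟨n, rfl⟩ := Nat.exists_eq_add_of_le' hi
  simpa using iterate_eulerC_add_neg_one_pow_mul_eulerC_inv hU (by simp)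
    (fun x => inv_mem_compl_pair hε) hf hf_inv n hq

theorem stmt_6 (r i : ℕ) (hi : 1 ≤ i) (q : ℂ) (hq : q ≠ 0)
    (h1 : 1 - (-1 : ℂ) ^ (r + 1) * q ≠ 0)
    (h2 : 1 - (-1 : ℂ) ^ (r + 1) * q⁻¹ ≠ 0) :
    (eulerC^[i] (fun x => x / (1 - (-1 : ℂ) ^ (r + 1) * x))) q +
      (-1 : ℂ) ^ i * (eulerC^[i] (fun x => x / (1 - (-1 : ℂ) ^ (r + 1) * x))) q⁻¹ = 0 :=
  stmt_6_general r i hi q hq h1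
end

section
/- Let A be a commutative ℚ-algebra containing sequences (c_k)_{k≥0}, (c'_k)_{k≥0}, (s_k)_{k≥0}, (s'_k)_{k≥0}, (s̃_k)_{k≥0} with c_0 = c'_0 = s_0 = s'_0 = s̃_0 = 1, such that Σ_{j=0}^k c_j s_{k-j} = 0 and Σ_{j=0}^k c'_j s'_{k-j} = 0 for all k ≥ 1, and s̃_k = Σ_{j=0}^k (-1)^{k-j} s_j s'_{k-j} for all k. Then for every m ≥ 0, the polynomial identity Σ_{k=0}^{m} (-1)^k s'_k h^{m-k} = Σ_{k=0}^{m} s̃_k H_{m-k} holds in A[h], where H_j = Σ_{i=0}^{j} c_i h^{j-i}. -/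
open Finset

lemma tri {A : Type*} [AddCommMonoid A] (f : ℕ → ℕ → A) :
    ∀ M, ∑ k ∈ range (M + 1), ∑ i ∈ range (M - k + 1), f k i
      = ∑ n ∈ range (M + 1), ∑ k ∈ range (n + 1), f k (n - k)
  | 0 => by simp
  | (M + 1) => by
    rw [Finset.sum_range_succ (f := fun n => ∑ k ∈ range (n + 1), f k (n - k)), ← tri f M,
      Finset.sum_range_succ (f := fun k => ∑ i ∈ range (M + 1 - k + 1), f k i)]
    have h1 : ∀ k ∈ range (M + 1), ∑ i ∈ range (M + 1 - k + 1), f k i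
        = ∑ i ∈ range (M - k + 1), f k i + f k (M + 1 - k) := by
      intro k hk
      have hk' : k ≤ M := Nat.lt_succ_iff.mp (mem_range.mp hk)
      have h2 : M + 1 - k = (M - k) + 1 := by omega
      rw [h2, Finset.sum_range_succ, ← h2]
    rw [Finset.sum_congr rfl h1, Finset.sum_add_distrib,
      Finset.sum_range_succ (fun k => f k (M + 1 - k)) (M + 1)]
    simp only [Nat.sub_self, zero_add, Finset.sum_range_one]
    abel

lemma refl_inner {A : Type*} [AddCommMonoid A] (f : ℕ → ℕ → A) (n : ℕ) :
    ∑ k ∈ range (n + 1), f k (n - k) = ∑ k ∈ range (n + 1), f (n - k) k := by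
  rw [← Finset.sum_range_reflect (fun k => f (n - k) k) (n + 1)]
  refine Finset.sum_congr rfl fun j hj => ?_
  have hj' : j ≤ n := Nat.lt_succ_iff.mp (mem_range.mp hj)
  have h1 : n + 1 - 1 - j = n - j := by omega
  have h2 : n - (n - j) = j := by omega
  rw [h1, h2]

lemma tri_comm {A : Type*} [AddCommMonoid A] (f : ℕ → ℕ → A) (M : ℕ) :
    ∑ k ∈ range (M + 1), ∑ i ∈ range (M - k + 1), f k i
      = ∑ i ∈ range (M + 1), ∑ k ∈ range (M - i + 1), f k i := by
  rw [tri f M, tri (fun i k => f k i) M]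
  exact Finset.sum_congr rfl fun n _ => refl_inner f n

theorem stmt_9 (A : Type*) [CommRing A] [Algebra ℚ A]
    (c c' s s' st : ℕ → A)
    (hc0 : c 0 = 1) (hc'0 : c' 0 = 1) (hs0 : s 0 = 1) (hs'0 : s' 0 = 1) (hst0 : st 0 = 1)
    (hcs : ∀ k, 1 ≤ k → ∑ j ∈ Finset.range (k + 1), c j * s (k - j) = 0)
    (hcs' : ∀ k, 1 ≤ k → ∑ j ∈ Finset.range (k + 1), c' j * s' (k - j) = 0)
    (hst : ∀ k, st k = ∑ j ∈ Finset.range (k + 1), (-1 : A) ^ (k - j) * s j * s' (k - j))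
    (m : ℕ) :
    ∑ k ∈ Finset.range (m + 1), Polynomial.C ((-1 : A) ^ k * s' k) * Polynomial.X ^ (m - k) =
      ∑ k ∈ Finset.range (m + 1), Polynomial.C (st k) *
        ∑ i ∈ Finset.range (m - k + 1), Polynomial.C (c i) * Polynomial.X ^ (m - k - i) := by
  have hsc : ∀ p : ℕ, ∑ j ∈ range (p + 1), s j * c (p - j) = if p = 0 then 1 else 0 := by
    intro p
    have h : ∑ j ∈ range (p + 1), s j * c (p - j)
        = ∑ j ∈ range (p + 1), c j * s (p - j) := by
      have := refl_inner (fun j i => s j * c i) p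
      rw [this]
      exact Finset.sum_congr rfl fun j _ => mul_comm _ _
    rw [h]
    rcases Nat.eq_zero_or_pos p with hp | hp
    · simp [hp, hc0, hs0]
    · have hp' : p ≠ 0 := by omega
      rw [hcs p hp]; simp [hp']
  have key : ∀ n : ℕ, ∑ k ∈ range (n + 1), st k * c (n - k) = (-1 : A) ^ n * s' n := by
    intro n
    calc ∑ k ∈ range (n + 1), st k * c (n - k)
        = ∑ k ∈ range (n + 1), ∑ j ∈ range (k + 1),
            (-1 : A) ^ (k - j) * s j * s' (k - j) * c (n - k) := by
          refine Finset.sum_congr rfl fun k hk => ?_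
          rw [hst k, Finset.sum_mul]
      _ = ∑ j ∈ range (n + 1), ∑ i ∈ range (n - j + 1),
            (-1 : A) ^ i * s j * s' i * c (n - j - i) := by
          rw [tri (fun j i => (-1 : A) ^ i * s j * s' i * c (n - j - i)) n]
          refine Finset.sum_congr rfl fun k hk => Finset.sum_congr rfl fun j hj => ?_
          have hj' : j ≤ k := Nat.lt_succ_iff.mp (mem_range.mp hj)
          have h : n - j - (k - j) = n - k := by omega
          rw [h]
      _ = ∑ i ∈ range (n + 1), ∑ j ∈ range (n - i + 1),
            (-1 : A) ^ i * s j * s' i * c (n - j - i) := by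
          exact tri_comm (fun j i => (-1 : A) ^ i * s j * s' i * c (n - j - i)) n
      _ = ∑ i ∈ range (n + 1), (-1 : A) ^ i * s' i *
            ∑ j ∈ range (n - i + 1), s j * c ((n - i) - j) := by
          refine Finset.sum_congr rfl fun i hi => ?_
          rw [Finset.mul_sum]
          refine Finset.sum_congr rfl fun j hj => ?_
          have hi' : i ≤ n := Nat.lt_succ_iff.mp (mem_range.mp hi)
          have hj' : j ≤ n - i := Nat.lt_succ_iff.mp (mem_range.mp hj)
          have h : n - i - j = n - j - i := by omega
          rw [h]; ring
      _ = (-1 : A) ^ n * s' n := by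
          rw [Finset.sum_congr rfl (fun i _ => by rw [hsc (n - i)])]
          rw [Finset.sum_eq_single n]
          · simp
          · intro i hi hne
            have h : n - i ≠ 0 := by
              have := Nat.lt_succ_iff.mp (mem_range.mp hi); omega
            simp [h]
          · intro h; exact absurd (self_mem_range_succ n) h
  symm
  calc ∑ k ∈ Finset.range (m + 1), Polynomial.C (st k) *
        ∑ i ∈ Finset.range (m - k + 1), Polynomial.C (c i) * Polynomial.X ^ (m - k - i)
      = ∑ k ∈ range (m + 1), ∑ i ∈ range (m - k + 1),
          Polynomial.C (st k * c i) * Polynomial.X ^ (m - k - i) := by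
        refine Finset.sum_congr rfl fun k _ => ?_
        rw [Finset.mul_sum]
        refine Finset.sum_congr rfl fun i _ => ?_
        rw [Polynomial.C_mul]; ring
    _ = ∑ n ∈ range (m + 1), ∑ k ∈ range (n + 1),
          Polynomial.C (st k * c (n - k)) * Polynomial.X ^ (m - k - (n - k)) :=
        tri (fun k i => Polynomial.C (st k * c i) * Polynomial.X ^ (m - k - i)) m
    _ = ∑ n ∈ range (m + 1),
          Polynomial.C ((-1 : A) ^ n * s' n) * Polynomial.X ^ (m - n) := by
        refine Finset.sum_congr rfl fun n _ => ?_
        have h : ∀ k ∈ range (n + 1),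
            Polynomial.C (st k * c (n - k)) * Polynomial.X ^ (m - k - (n - k))
            = Polynomial.C (st k * c (n - k)) * Polynomial.X ^ (m - n) := by
          intro k hk
          have hk' : k ≤ n := Nat.lt_succ_iff.mp (mem_range.mp hk)
          have : m - k - (n - k) = m - n := by omega
          rw [this]
        rw [Finset.sum_congr rfl h, ← Finset.sum_mul, ← map_sum, key n]
end

section
/- Let B be a commutative ℚ-algebra and fix r ∈ ℕ. Suppose given elements f, f' ∈ B and sequences (c_k), (c'_k), (s_k), (s'_k), (s̃_k) in B (k ≥ 0) with c_0=c'_0=s_0=s'_0=s̃_0=1, satisfying: (a) Σ_{j=0}^k c_j s_{k-j} = 0 and Σ_{j=0}^k c'_j s'_{k-j} = 0 for all k ≥ 1; (b) s̃_k = Σ_{j=0}^k (-1)^{k-j} s_j s'_{k-j} for all k; (c) f + f' = (-1)^r. Define W_0 = f, W'_0 = f', and recursively W_ν = s_ν f + Σ_{j=1}^{ν} W_{ν-j}·((-1)^r c_j f - (-1)^{r+j} c'_j f - c_j) and W'_ν = s'_ν f' + Σ_{j=1}^{ν} W'_{ν-j}·((-1)^r c'_j f' - (-1)^{r+j} c_j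 f' - c'_j). Then for all ν ≥ 0: W_ν - (-1)^{ν+1} W'_ν = (-1)^r s̃_ν. -/
/-!
Pass to generating series. Using `f + f' = (-1)^r`, the recursion for `W` says
`K(X) W(X) = f S(X)` with `K(X) = (-1)^r (f' C(X) + f C'(-X))`, and the recursion for `W'`,
after `X ↦ -X`, says `K(X) W'(-X) = f' S'(-X)` with the same `K`. Since `C S = 1`,
`C'(-X) S'(-X) = 1` and `S̃(X) = S(X) S'(-X)`, also `K(X) (-1)^r S̃(X) = f S(X) + f' S'(-X)`.
The constant term of `K` is `1`, so `K` cancels and `W(X) + W'(-X) = (-1)^r S̃(X)`,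
which is the claim coefficientwise.
-/

open PowerSeries Finset

theorem Finset.sum_range_succ_eq_add_sum_Icc {M : Type*} [AddCommMonoid M]
    (g : ℕ → M) (n : ℕ) : ∑ j ∈ range (n + 1), g j = g 0 + ∑ j ∈ Icc 1 n, g j := by
  rw [range_eq_Ico, sum_eq_sum_Ico_succ_bot n.succ_pos, zero_add, Nat.succ_eq_add_one,
    Ico_add_one_right_eq_Icc]

namespace PowerSeries

section CommSemiring

variable {R : Type*} [CommSemiring R]

theorem rescale_C (a b : R) : rescale a (C b) = C b := by
  ext n
  rcases n with _ | n <;> simp [coeff_C]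

theorem coeff_mk_mul_mk (a b : ℕ → R) (n : ℕ) :
    coeff n (mk a * mk b) = ∑ j ∈ range (n + 1), a j * b (n - j) := by
  rw [coeff_mul, Nat.sum_antidiagonal_eq_sum_range_succ_mk]
  simp only [coeff_mk]

theorem mk_mul_mk_eq_one {a b : ℕ → R} (ha : a 0 = 1) (hb : b 0 = 1)
    (hab : ∀ n, 1 ≤ n → ∑ j ∈ range (n + 1), a j * b (n - j) = 0) : mk a * mk b = 1 := by
  ext n
  rw [coeff_mk_mul_mk, coeff_one]
  rcases Nat.eq_zero_or_pos n with rfl | hn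
  · simp [ha, hb]
  · rw [hab n hn, if_neg hn.ne']

end CommSemiring

theorem mk_mul_mk_eq_neg_of_recursion {R : Type*} [CommRing R] {W g a : ℕ → R}
    (ha : a 0 = -1) (h0 : W 0 = g 0)
    (h : ∀ ν, 1 ≤ ν → W ν = g ν + ∑ j ∈ Icc 1 ν, W (ν - j) * a j) :
    mk a * mk W = -mk g := by
  have h' : ∀ ν, W ν = g ν + ∑ j ∈ Icc 1 ν, W (ν - j) * a j := by
    rintro (_ | ν)
    · simp [h0]
    · exact h _ ν.succ_pos
  ext ν
  rw [coeff_mk_mul_mk, sum_range_succ_eq_add_sum_Icc, map_neg, coeff_mk, ha, Nat.sub_zero]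
  simp_rw [mul_comm (a _)]
  linear_combination -h' ν

end PowerSeries

section Flop

variable {B : Type*} [CommRing B]

theorem neg_one_pow_mul_self (r : ℕ) : (-1 : B) ^ r * (-1) ^ r = 1 := by
  rw [← mul_pow, neg_one_mul, neg_neg, one_pow]

noncomputable def flopKernel (r : ℕ) (f f' : B) (c c' : ℕ → B) : B⟦X⟧ :=
  C ((-1) ^ r) * (C f' * mk c + C f * rescale (-1) (mk c'))

variable {r : ℕ} {f f' : B} {c c' : ℕ → B}

theorem isUnit_flopKernel (hff' : f + f' = (-1 : B) ^ r) (hc0 : c 0 = 1) (hc'0 : c' 0 = 1) :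
    IsUnit (flopKernel r f f' c c') := by
  rw [isUnit_iff_constantCoeff]
  convert isUnit_one (M := B)
  simp only [flopKernel, map_mul, map_add, ← coeff_zero_eq_constantCoeff_apply,
    coeff_zero_C, coeff_rescale, coeff_mk, hc0, hc'0]
  linear_combination (-1 : B) ^ r * hff' + neg_one_pow_mul_self (B := B) r

theorem rescale_neg_one_flopKernel :
    rescale (-1) (flopKernel r f' f c' c) = flopKernel r f f' c c' := by
  simp only [flopKernel, map_mul, map_add, rescale_C, rescale_rescale, neg_one_mul, neg_neg,
    rescale_one, RingHom.id_apply]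
  ring

theorem mk_eq_neg_flopKernel (hff' : f + f' = (-1 : B) ^ r) :
    mk (fun j ↦ (-1) ^ r * c j * f - (-1) ^ (r + j) * c' j * f - c j)
      = -flopKernel r f f' c c' := by
  ext j
  simp only [flopKernel, map_neg, coeff_C_mul, map_add, coeff_rescale, coeff_mk, pow_add]
  linear_combination ((-1 : B) ^ r * c j) * hff' + c j * neg_one_pow_mul_self (B := B) r

theorem flopKernel_mul_mk {s W : ℕ → B} (hff' : f + f' = (-1 : B) ^ r) (hc0 : c 0 = 1)
    (hc'0 : c' 0 = 1) (hs0 : s 0 = 1) (hW0 : W 0 = f)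
    (hW : ∀ ν, 1 ≤ ν → W ν = s ν * f + ∑ j ∈ Icc 1 ν,
      W (ν - j) * ((-1 : B) ^ r * c j * f - (-1 : B) ^ (r + j) * c' j * f - c j)) :
    flopKernel r f f' c c' * mk W = C f * mk s := by
  have hrec := mk_mul_mk_eq_neg_of_recursion (g := fun ν ↦ s ν * f)
    (by simp [hc0, hc'0]) (by simp [hW0, hs0]) hW
  rw [mk_eq_neg_flopKernel hff', neg_mul, neg_inj] at hrec
  rw [hrec]
  ext ν
  simp [mul_comm]

theorem flopKernel_mul_mk_mul_rescale {s s' : ℕ → B} (hcs : mk c * mk s = 1)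
    (hcs' : mk c' * mk s' = 1) :
    flopKernel r f f' c c' * (C ((-1) ^ r) * (mk s * rescale (-1) (mk s')))
      = C f * mk s + C f' * rescale (-1) (mk s') := by
  have hcs'' : rescale (-1) (mk c') * rescale (-1) (mk s') = 1 := by
    rw [← map_mul, hcs', map_one]
  have hε : C ((-1 : B) ^ r) * C ((-1) ^ r) = 1 := by
    rw [← map_mul, neg_one_pow_mul_self, map_one]
  unfold flopKernel
  linear_combination (C f' * rescale (-1) (mk s')) * hcs + (C f * mk s) * hcs''
    + (C f' * mk c + C f * rescale (-1) (mk c')) * mk s * rescale (-1) (mk s') * hε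

end Flop

theorem stmt_10_general (B : Type*) [CommRing B] (r : ℕ) (f f' : B)
    (c c' s s' st : ℕ → B)
    (hc0 : c 0 = 1) (hc'0 : c' 0 = 1) (hs0 : s 0 = 1) (hs'0 : s' 0 = 1)
    (hcs : ∀ k, 1 ≤ k → ∑ j ∈ Finset.range (k + 1), c j * s (k - j) = 0)
    (hcs' : ∀ k, 1 ≤ k → ∑ j ∈ Finset.range (k + 1), c' j * s' (k - j) = 0)
    (hst : ∀ k, st k = ∑ j ∈ Finset.range (k + 1), (-1 : B) ^ (k - j) * s j * s' (k - j))
    (hff' : f + f' = (-1 : B) ^ r)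
    (W W' : ℕ → B)
    (hW0 : W 0 = f) (hW'0 : W' 0 = f')
    (hW : ∀ ν, 1 ≤ ν → W ν = s ν * f + ∑ j ∈ Finset.Icc 1 ν,
      W (ν - j) * ((-1 : B) ^ r * c j * f - (-1 : B) ^ (r + j) * c' j * f - c j))
    (hW' : ∀ ν, 1 ≤ ν → W' ν = s' ν * f' + ∑ j ∈ Finset.Icc 1 ν,
      W' (ν - j) * ((-1 : B) ^ r * c' j * f' - (-1 : B) ^ (r + j) * c j * f' - c' j)) :
    ∀ ν, W ν - (-1 : B) ^ (ν + 1) * W' ν = (-1 : B) ^ r * st ν := by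
  have hSt : mk st = mk s * rescale (-1) (mk s') := by
    ext k
    rw [rescale_mk, coeff_mk_mul_mk, coeff_mk, hst]
    exact sum_congr rfl fun j _ ↦ by ring
  have hK := flopKernel_mul_mk hff' hc0 hc'0 hs0 hW0 hW
  have hK' := congrArg (rescale (-1))
    (flopKernel_mul_mk (by rwa [add_comm]) hc'0 hc0 hs'0 hW'0 hW')
  rw [map_mul, map_mul, rescale_neg_one_flopKernel, rescale_C] at hK'
  have hgen : mk W + rescale (-1) (mk W') = C ((-1) ^ r) * mk st := by
    refine (isUnit_flopKernel hff' hc0 hc'0).mul_left_cancel ?_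
    rw [mul_add, hK, hK', hSt, flopKernel_mul_mk_mul_rescale (mk_mul_mk_eq_one hc0 hs0 hcs)
      (mk_mul_mk_eq_one hc'0 hs'0 hcs')]
  intro ν
  have hcoeff := congrArg (coeff ν) hgen
  simp only [map_add, coeff_mk, coeff_rescale, coeff_C_mul] at hcoeff
  rw [pow_succ]
  linear_combination hcoeff

theorem stmt_10 (B : Type*) [CommRing B] [Algebra ℚ B] (r : ℕ) (f f' : B)
    (c c' s s' st : ℕ → B)
    (hc0 : c 0 = 1) (hc'0 : c' 0 = 1) (hs0 : s 0 = 1) (hs'0 : s' 0 = 1) (hst0 : st 0 = 1)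
    (hcs : ∀ k, 1 ≤ k → ∑ j ∈ Finset.range (k + 1), c j * s (k - j) = 0)
    (hcs' : ∀ k, 1 ≤ k → ∑ j ∈ Finset.range (k + 1), c' j * s' (k - j) = 0)
    (hst : ∀ k, st k = ∑ j ∈ Finset.range (k + 1), (-1 : B) ^ (k - j) * s j * s' (k - j))
    (hff' : f + f' = (-1 : B) ^ r)
    (W W' : ℕ → B)
    (hW0 : W 0 = f) (hW'0 : W' 0 = f')
    (hW : ∀ ν, 1 ≤ ν → W ν = s ν * f + ∑ j ∈ Finset.Icc 1 ν,
      W (ν - j) * ((-1 : B) ^ r * c j * f - (-1 : B) ^ (r + j) * c' j * f - c j))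
    (hW' : ∀ ν, 1 ≤ ν → W' ν = s' ν * f' + ∑ j ∈ Finset.Icc 1 ν,
      W' (ν - j) * ((-1 : B) ^ r * c' j * f' - (-1 : B) ^ (r + j) * c j * f' - c' j)) :
    ∀ ν, W ν - (-1 : B) ^ (ν + 1) * W' ν = (-1 : B) ^ r * st ν :=
  stmt_10_general B r f f' c c' s s' st hc0 hc'0 hs0 hs'0 hcs hcs' hst hff' W W' hW0 hW'0 hW hW'
end
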